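/- For an additive functor F : A → B between small preadditive categories, a contravariant additive functor T on A, and a covariant additive functor S on B, there is a natural isomorphism (F_* T) ⊗_B S ≅ T ⊗_A (F* S). -/

import Mathlib

open CategoryTheory Opposite
open scoped TensorProduct DirectSum

/-- The subgroup of relations defining the coend tensor product `T ⊗_C S`. -/
noncomputable def tensorRel {C : Type} [SmallCategory C] [Preadditive C] [DecidableEq C]
    (T : Cᵒᵖ ⥤ AddCommGrpCat) (S : C ⥤ AddCommGrpCat) :
    AddSubgroup (⨁ a : C, TensorProduct ℤ (T.obj (op a)) (S.obj a)) :=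
  AddSubgroup.closure
    {z | ∃ (a a' : C) (α : a ⟶ a') (x : T.obj (op a')) (y : S.obj a),
      z = DirectSum.of (fun b : C => TensorProduct ℤ (T.obj (op b)) (S.obj b)) a
            (T.map α.op x ⊗ₜ[ℤ] y)
        - DirectSum.of (fun b : C => TensorProduct ℤ (T.obj (op b)) (S.obj b)) a'
            (x ⊗ₜ[ℤ] S.map α y)}

/-- The coend tensor product `T ⊗_C S` of a contravariant and a covariant additive functor. -/
noncomputable def functorTensor {C : Type} [SmallCategory C] [Preadditive C] [DecidableEq C]
    (T : Cᵒᵖ ⥤ AddCommGrpCat) (S : C ⥤ AddCommGrpCat) : Type :=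
  (⨁ a : C, TensorProduct ℤ (T.obj (op a)) (S.obj a)) ⧸ tensorRel T S

noncomputable instance {C : Type} [SmallCategory C] [Preadditive C] [DecidableEq C]
    (T : Cᵒᵖ ⥤ AddCommGrpCat) (S : C ⥤ AddCommGrpCat) : AddCommGroup (functorTensor T S) :=
  inferInstanceAs
    (AddCommGroup ((⨁ a : C, TensorProduct ℤ (T.obj (op a)) (S.obj a)) ⧸ tensorRel T S))

/-- Restriction along an additive functor `F : A ⥤ B` on categories of contravariant additive
functors: `F* U = U ∘ F`. -/
def restrictAdditive {A B : Type} [SmallCategory A] [SmallCategory B]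
    [Preadditive A] [Preadditive B] (F : A ⥤ B) [F.Additive] :
    (Bᵒᵖ ⥤+ AddCommGrpCat) ⥤ (Aᵒᵖ ⥤+ AddCommGrpCat) :=
  ObjectProperty.lift _
    (AdditiveFunctor.forget _ _ ⋙ (Functor.whiskeringLeft Aᵒᵖ Bᵒᵖ AddCommGrpCat).obj F.op)
    (fun U => inferInstanceAs (Functor.Additive (F.op ⋙ U.obj)))

/-!
Both tensor products corepresent the same functor of an abelian group `M`. A homomorphism
`T ⊗_C S → M` is the same as a natural transformation `T ⟶ Hom(S -, M)`, so
`Hom((F_* T) ⊗_B S, M) ≅ Hom(F_* T, Hom(S -, M)) ≅ Hom(T, Hom(S (F -), M)) ≅ Hom(T ⊗_A F* S, M)`,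
the middle step being the adjunction `F_* ⊣ F*`. All three bijections are natural in `M`, so the
Yoneda lemma gives the isomorphism.
-/

lemma naturality_preadditiveYoneda_apply {C : Type*} [Category C] {T : Cᵒᵖ ⥤ AddCommGrpCat}
    {S : C ⥤ AddCommGrpCat} {M : AddCommGrpCat} (η : T ⟶ S.op ⋙ preadditiveYoneda.obj M)
    {a a' : C} (α : a ⟶ a') (x : T.obj (op a')) (y : S.obj a) :
    ((η.app (op a)).hom (T.map α.op x)).hom y = ((η.app (op a')).hom x).hom (S.map α y) :=
  congrArg (fun g : S.obj a ⟶ M => g.hom y) (NatTrans.naturality_apply η α.op x)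

def additiveHomFunctor {C : Type*} [Category C] [Preadditive C] (S : C ⥤ AddCommGrpCat)
    [S.Additive] : AddCommGrpCat ⥤ (Cᵒᵖ ⥤+ AddCommGrpCat) :=
  ObjectProperty.lift _ (preadditiveYoneda ⋙ (Functor.whiskeringLeft _ _ _).obj S.op)
    (fun M => inferInstanceAs (S.op ⋙ preadditiveYoneda.obj M).Additive)

namespace functorTensor

variable {C : Type} [SmallCategory C] [Preadditive C] [DecidableEq C]
  (T : Cᵒᵖ ⥤ AddCommGrpCat) (S : C ⥤ AddCommGrpCat)

/-- The class of `x ⊗ y` in the summand of `a`. -/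
noncomputable def tmul (a : C) : T.obj (op a) →+ S.obj a →+ functorTensor T S :=
  (LinearMap.toAddMonoidHom'.comp (TensorProduct.mk ℤ _ _).toAddMonoidHom).compr₂
    ((QuotientAddGroup.mk' (tensorRel T S)).comp
      (DirectSum.of (fun b : C => TensorProduct ℤ (T.obj (op b)) (S.obj b)) a))

variable {T S}

lemma tmul_map_eq_tmul_map {a a' : C} (α : a ⟶ a') (x : T.obj (op a')) (y : S.obj a) :
    tmul T S a (T.map α.op x) y = tmul T S a' x (S.map α y) :=
  QuotientAddGroup.eq_iff_sub_mem.mpr (AddSubgroup.subset_closure ⟨a, a', α, x, y, rfl⟩)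

lemma hom_ext {M : Type} [AddCommGroup M] {f g : functorTensor T S →+ M}
    (h : ∀ a x y, f (tmul T S a x y) = g (tmul T S a x y)) : f = g :=
  QuotientAddGroup.addMonoidHom_ext _ <| DirectSum.addHom_ext' fun a =>
    AddMonoidHom.toIntLinearMap_injective (TensorProduct.ext' (h a))

variable {M : AddCommGrpCat}

noncomputable def lift (η : T ⟶ S.op ⋙ preadditiveYoneda.obj M) : functorTensor T S →+ M :=
  QuotientAddGroup.lift _
    (DirectSum.toAddMonoid fun a => TensorProduct.liftAddHom
      (AddCommGrpCat.homAddEquiv.toAddMonoidHom.comp (η.app (op a)).hom)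
      (fun n x y => by simp [map_zsmul]))
    (by
      rw [tensorRel, AddSubgroup.closure_le]
      rintro _ ⟨a, a', α, x, y, rfl⟩
      simp only [SetLike.mem_coe, AddMonoidHom.mem_ker, map_sub, DirectSum.toAddMonoid_of,
        TensorProduct.liftAddHom_tmul]
      exact sub_eq_zero.mpr (naturality_preadditiveYoneda_apply η α x y))

lemma lift_tmul (η : T ⟶ S.op ⋙ preadditiveYoneda.obj M) (a : C) (x : T.obj (op a))
    (y : S.obj a) : lift η (tmul T S a x y) = ((η.app (op a)).hom x).hom y := by
  show QuotientAddGroup.lift _ _ _ (QuotientAddGroup.mk _) = _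
  rw [QuotientAddGroup.lift_mk, DirectSum.toAddMonoid_of]
  exact TensorProduct.liftAddHom_tmul _ _ _ _

variable (T S M)

noncomputable def homEquiv :
    (AddCommGrpCat.of (functorTensor T S) ⟶ M) ≃ (T ⟶ S.op ⋙ preadditiveYoneda.obj M) where
  toFun f :=
    { app a := AddCommGrpCat.ofHom
        (AddCommGrpCat.homAddEquiv.symm.toAddMonoidHom.comp ((tmul T S a.unop).compr₂ f.hom))
      naturality a a' α := by
        ext x : 2
        refine AddCommGrpCat.ext fun y => ?_
        exact congrArg f.hom (tmul_map_eq_tmul_map α.unop x y) }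
  invFun η := AddCommGrpCat.ofHom (lift η)
  left_inv f := by
    ext1
    exact hom_ext fun a x y => lift_tmul _ a x y
  right_inv η := by
    ext a : 2
    refine AddCommGrpCat.ext fun x => AddCommGrpCat.ext fun y => ?_
    exact lift_tmul η a.unop x y

noncomputable def coyonedaIso (T : Cᵒᵖ ⥤+ AddCommGrpCat) (S : C ⥤ AddCommGrpCat) [S.Additive] :
    coyoneda.obj (op (AddCommGrpCat.of (functorTensor T.obj S))) ≅
      additiveHomFunctor S ⋙ coyoneda.obj (op T) :=
  NatIso.ofComponents
    (fun M => ((homEquiv T.obj S M).trans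
      (InducedCategory.homEquiv (X := T) (Y := (additiveHomFunctor S).obj M)).symm).toIso)
    (fun _ => rfl)

end functorTensor

noncomputable def lanTensorIso {A B : Type} [SmallCategory A] [SmallCategory B]
    [Preadditive A] [Preadditive B] [DecidableEq A] [DecidableEq B] {F : A ⥤ B} [F.Additive]
    {L : (Aᵒᵖ ⥤+ AddCommGrpCat) ⥤ (Bᵒᵖ ⥤+ AddCommGrpCat)} (adj : L ⊣ restrictAdditive F)
    (T : Aᵒᵖ ⥤+ AddCommGrpCat) (S : B ⥤ AddCommGrpCat) [S.Additive] :
    AddCommGrpCat.of (functorTensor (L.obj T).obj S) ≅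
      AddCommGrpCat.of (functorTensor T.obj (F ⋙ S)) :=
  -- `additiveHomFunctor S ⋙ restrictAdditive F` is definitionally `additiveHomFunctor (F ⋙ S)`.
  (Coyoneda.fullyFaithful.preimageIso
    (functorTensor.coyonedaIso (L.obj T) S ≪≫
      Functor.isoWhiskerLeft (additiveHomFunctor S) (adj.compCoyonedaIso.app (op T)) ≪≫
      (functorTensor.coyonedaIso T (F ⋙ S)).symm)).unop.symm

/-- `(F_* T) ⊗_B S ≅ T ⊗_A (F* S)`: for any left adjoint `L` of the restriction `F*` (a model
of the left Kan extension `F_*`), a contravariant additive functor `T` on `A` and a covariant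
additive functor `S` on `B`, the coend tensor product of `F_* T` with `S` over `B` is
isomorphic to that of `T` with `F* S = S ∘ F` over `A`. -/
theorem lan_tensor_iso {A B : Type} [SmallCategory A] [SmallCategory B]
    [Preadditive A] [Preadditive B] [DecidableEq A] [DecidableEq B]
    (F : A ⥤ B) [F.Additive]
    (L : (Aᵒᵖ ⥤+ AddCommGrpCat) ⥤ (Bᵒᵖ ⥤+ AddCommGrpCat))
    (adj : L ⊣ restrictAdditive F)
    (T : Aᵒᵖ ⥤+ AddCommGrpCat) (S : B ⥤ AddCommGrpCat) [S.Additive] :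
    Nonempty (functorTensor (L.obj T).obj S ≃+ functorTensor T.obj (F ⋙ S)) :=
  ⟨(lanTensorIso adj T S).addCommGroupIsoToAddEquiv⟩
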